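/- Let c¹, c² ∈ ℕ₊ⁿ define a BUCO instance and let (H, c1, c2) be the associated MSp instance. Let S be a Pareto-optimal spanner of H with {s,t} ∈ S such that at least one edge {v_i', w_i} is missing from S, and let l be an index i with {v_i', w_i} ∉ S of greatest weight c²_i among all such indices. Then f2(S) = d^S_{c2}(v_l', w_l)/d^E_{c2}(v_l', w_l) = d^S_{c2}(v_l', w_l). -/
import Mathlib

set_option maxHeartbeats 2000000


namespace MSpPaper

open SimpleGraph

variable {V : Type*}

/-- Minimum total `c2`-weight of a walk from `u` to `v` using only edges in `F`
(the set of weights of such walks is a set of naturals; its infimum is `0` when no walk exists). -/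
noncomputable def wdist (F : Set (Sym2 V)) (c2 : Sym2 V → ℕ) (u v : V) : ℕ :=
  sInf (Set.range fun p : (SimpleGraph.fromEdgeSet F).Walk u v => (p.edges.map c2).sum)

/-- `S` is a spanner of `G`: a subset of the edges such that the resulting subgraph is connected. -/
def IsSpanner (G : SimpleGraph V) (S : Set (Sym2 V)) : Prop :=
  S ⊆ G.edgeSet ∧ (SimpleGraph.fromEdgeSet S).Connected

/-- First objective: total `c1`-cost of the spanner. -/
def f1 (c1 : Sym2 V → ℤ) (S : Finset (Sym2 V)) : ℤ := ∑ e ∈ S, c1 e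

open scoped Classical in
/-- Second objective (stretch factor): maximum over pairs of distinct vertices of the
distance ratio `d^S(u,v)/d^E(u,v)` (junk value `0` if there is no pair of distinct vertices). -/
noncomputable def f2 [Fintype V] (E S : Set (Sym2 V)) (c2 : Sym2 V → ℕ) : ℚ :=
  if h : ((Finset.univ : Finset (V × V)).filter fun p => p.1 ≠ p.2).Nonempty then
    ((Finset.univ : Finset (V × V)).filter fun p => p.1 ≠ p.2).sup' h
      (fun p => (wdist S c2 p.1 p.2 : ℚ) / (wdist E c2 p.1 p.2 : ℚ))
  else 0

/-- The value vector of a spanner. -/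
noncomputable def valueVec [Fintype V] (G : SimpleGraph V) (c1 : Sym2 V → ℤ) (c2 : Sym2 V → ℕ)
    (S : Finset (Sym2 V)) : ℚ × ℚ :=
  ((f1 c1 S : ℚ), f2 G.edgeSet (↑S) c2)

/-- `y'` dominates `y`: componentwise `≤` and unequal. -/
def Dominates (y' y : ℚ × ℚ) : Prop := y' ≤ y ∧ y' ≠ y

/-- The non-dominated set of an MSp instance. -/
def YN [Fintype V] (G : SimpleGraph V) (c1 : Sym2 V → ℤ) (c2 : Sym2 V → ℕ) : Set (ℚ × ℚ) :=
  {y | (∃ S : Finset (Sym2 V), IsSpanner G (↑S) ∧ valueVec G c1 c2 S = y) ∧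
       ∀ S' : Finset (Sym2 V), IsSpanner G (↑S') → ¬ Dominates (valueVec G c1 c2 S') y}


/-! ### The MSp instance associated with a BUCO instance (Section 4)

A BUCO instance is given by vectors `a = c¹` and `b = c²` in `ℕ₊ⁿ`; feasible
solutions are `x : Fin n → Bool` (`x i = true` meaning `x_i = 1`). -/

/-- Vertices of the graph `H`: for each `i`, the vertex `(i,0)` is `v_i`, `(i,1)` is `v_i'`,
and `(i,2)` is `w_i`. -/
abbrev Vtx (n : ℕ) := Fin n × Fin 3

/-- The weights `(c1, c2)` of the (ordered) pair `x y` of vertices of `H`;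
`(0, 0)` (in particular `c2 = 0`) marks non-edges.
Here `M = (∑ i, a i) + 1`. -/
def wtB (n : ℕ) (a b : Fin n → ℕ) (x y : Vtx n) : ℤ × ℕ :=
  if x.2 = 0 ∧ y.2 = 2 ∧ x.1 = y.1 then (0, b x.1 + 2)
  else if x.2 = 0 ∧ y.2 = 1 ∧ x.1 = y.1 then (0, 1)
  else if x.2 = 1 ∧ y.2 = 2 ∧ x.1 = y.1 then ((a x.1 : ℤ), 1)
  else if x.2 = 2 ∧ y.2 = 0 ∧ (y.1 : ℕ) = (x.1 : ℕ) + 1 then (0, 1)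
  else if x.2 = 0 ∧ y.2 = 2 ∧ (x.1 : ℕ) = 0 ∧ (y.1 : ℕ) = n - 1 ∧ x.1 ≠ y.1 then
    (((∑ i, a i : ℕ) : ℤ) + 1, 1)
  else (0, 0)

/-- The cost function `c1` of `H`. -/
def c1B (n : ℕ) (a b : Fin n → ℕ) : Sym2 (Vtx n) → ℤ :=
  Sym2.lift ⟨fun x y => (wtB n a b x y).1 + (wtB n a b y x).1, fun _ _ => add_comm _ _⟩

/-- The length function `c2` of `H`. -/
def c2B (n : ℕ) (a b : Fin n → ℕ) : Sym2 (Vtx n) → ℕ :=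
  Sym2.lift ⟨fun x y => (wtB n a b x y).2 + (wtB n a b y x).2, fun _ _ => add_comm _ _⟩

/-- The edge set of `H`: exactly the pairs with positive length. -/
def EB (n : ℕ) (a b : Fin n → ℕ) : Set (Sym2 (Vtx n)) := {e | c2B n a b e ≠ 0}

/-- The graph `H` associated with the BUCO instance `(a, b)`. -/
def HB (n : ℕ) (a b : Fin n → ℕ) : SimpleGraph (Vtx n) :=
  SimpleGraph.fromEdgeSet (EB n a b)

/-- The vertex `v_i`. -/
def vB (n : ℕ) (i : Fin n) : Vtx n := (i, 0)
/-- The vertex `v_i'`. -/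
def pB (n : ℕ) (i : Fin n) : Vtx n := (i, 1)
/-- The vertex `w_i`. -/
def wB (n : ℕ) (i : Fin n) : Vtx n := (i, 2)
/-- The vertex `s = v_1`. -/
def sB (n : ℕ) (hn : 0 < n) : Vtx n := (⟨0, hn⟩, 0)
/-- The vertex `t = w_n`. -/
def tB (n : ℕ) (hn : 0 < n) : Vtx n := (⟨n - 1, Nat.sub_lt hn one_pos⟩, 2)

open scoped Classical in
/-- The spanner `S_x` of `H` associated with a BUCO solution `x`: all edges of zero
`c1`-cost together with the edges `{v_i', w_i}` for every `i` with `x_i = 0`. -/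
noncomputable def Sx (n : ℕ) (a b : Fin n → ℕ) (x : Fin n → Bool) : Finset (Sym2 (Vtx n)) :=
  (Finset.univ.filter fun e => e ∈ (HB n a b).edgeSet ∧ c1B n a b e = 0) ∪
    (Finset.univ.filter fun i : Fin n => x i = false).image fun i => s(pB n i, wB n i)

/-- The value vector `(-c¹ᵀx, c²ᵀx)` of a BUCO solution `x`, as a vector in `ℚ²`. -/
def bucoVal (n : ℕ) (a b : Fin n → ℕ) (x : Fin n → Bool) : ℚ × ℚ :=
  (-(∑ i, if x i then (a i : ℚ) else 0), ∑ i, if x i then (b i : ℚ) else 0)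

/-! ## Generic wdist lemmas -/

section WdistLemmas
variable {V : Type*} {F F' : Set (Sym2 V)} {c2 : Sym2 V → ℕ} {u v w : V}

lemma wdist_le_walk (p : (fromEdgeSet F).Walk u v) :
    wdist F c2 u v ≤ (p.edges.map c2).sum :=
  Nat.sInf_le ⟨p, rfl⟩

lemma wdist_exists (h : Nonempty ((fromEdgeSet F).Walk u v)) :
    ∃ p : (fromEdgeSet F).Walk u v, (p.edges.map c2).sum = wdist F c2 u v := by
  have hne : (Set.range fun p : (fromEdgeSet F).Walk u v => (p.edges.map c2).sum).Nonempty :=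
    Set.range_nonempty _
  exact Nat.sInf_mem hne

lemma walk_weight_ge_potential (φ : V → ℕ)
    (hφ : ∀ x y : V, (fromEdgeSet F).Adj x y → φ y ≤ φ x + c2 s(x, y)) :
    ∀ {u v : V} (p : (fromEdgeSet F).Walk u v), φ v ≤ φ u + (p.edges.map c2).sum := by
  intro u v p
  induction p with
  | nil => simp
  | cons h q ih =>
    rename_i x y z
    simp only [SimpleGraph.Walk.edges_cons, List.map_cons, List.sum_cons]
    calc φ z ≤ φ y + (q.edges.map c2).sum := ih
    _ ≤ (φ x + c2 s(x,y)) + (q.edges.map c2).sum := by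
        exact Nat.add_le_add_right (hφ x y h) _
    _ = φ x + (c2 s(x,y) + (q.edges.map c2).sum) := by ring

lemma wdist_ge_potential (φ : V → ℕ)
    (hφ : ∀ x y : V, (fromEdgeSet F).Adj x y → φ y ≤ φ x + c2 s(x, y))
    (h : Nonempty ((fromEdgeSet F).Walk u v)) :
    φ v ≤ φ u + wdist F c2 u v := by
  obtain ⟨p, hp⟩ := wdist_exists (c2 := c2) h
  exact hp ▸ walk_weight_ge_potential φ hφ p

lemma wdist_anti (hFF : F ⊆ F') (h : Nonempty ((fromEdgeSet F).Walk u v)) :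
    wdist F' c2 u v ≤ wdist F c2 u v := by
  obtain ⟨p, hp⟩ := wdist_exists (c2 := c2) h
  rw [← hp]
  have := wdist_le_walk (c2 := c2)
    (p.transfer (fromEdgeSet F') (fun e he => by
      have := p.edges_subset_edgeSet he
      rw [edgeSet_fromEdgeSet] at this ⊢
      exact ⟨hFF this.1, this.2⟩))
  rwa [SimpleGraph.Walk.edges_transfer] at this

lemma wdist_triangle (h1 : Nonempty ((fromEdgeSet F).Walk u w))
    (h2 : Nonempty ((fromEdgeSet F).Walk w v)) :
    wdist F c2 u v ≤ wdist F c2 u w + wdist F c2 w v := by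
  obtain ⟨p, hp⟩ := wdist_exists (c2 := c2) h1
  obtain ⟨q, hq⟩ := wdist_exists (c2 := c2) h2
  have := wdist_le_walk (c2 := c2) (p.append q)
  rwa [SimpleGraph.Walk.edges_append, List.map_append, List.sum_append, hp, hq] at this

open scoped Classical in
lemma wdist_pos (hpos : ∀ e ∈ F, c2 e ≠ 0) (huv : u ≠ v)
    (h : Nonempty ((fromEdgeSet F).Walk u v)) :
    1 ≤ wdist F c2 u v := by
  have := wdist_ge_potential (F := F) (c2 := c2) (fun x => if x = u then 0 else 1)
    (fun x y hadj => by
      rw [fromEdgeSet_adj] at hadj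
      have h1 : 1 ≤ c2 s(x,y) := Nat.one_le_iff_ne_zero.2 (hpos _ hadj.1)
      beta_reduce; split_ifs <;> omega) h
  simpa [huv.symm] using this

end WdistLemmas
section Inventory
variable {n : ℕ} (a b : Fin n → ℕ)

lemma c2B_mk (x y : Vtx n) : c2B n a b s(x,y) = (wtB n a b x y).2 + (wtB n a b y x).2 := rfl
lemma c1B_mk (x y : Vtx n) : c1B n a b s(x,y) = (wtB n a b x y).1 + (wtB n a b y x).1 := rfl

lemma edge_inv {x y : Vtx n} (h : c2B n a b s(x,y) ≠ 0) :
    (x.1 = y.1 ∧ (((x.2:ℕ) = 0 ∧ (y.2:ℕ) = 2) ∨ ((x.2:ℕ) = 2 ∧ (y.2:ℕ) = 0)) ∧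
      c2B n a b s(x,y) = b x.1 + 2 ∧ c1B n a b s(x,y) = 0) ∨
    (x.1 = y.1 ∧ (((x.2:ℕ) = 0 ∧ (y.2:ℕ) = 1) ∨ ((x.2:ℕ) = 1 ∧ (y.2:ℕ) = 0)) ∧
      c2B n a b s(x,y) = 1 ∧ c1B n a b s(x,y) = 0) ∨
    (x.1 = y.1 ∧ (((x.2:ℕ) = 1 ∧ (y.2:ℕ) = 2) ∨ ((x.2:ℕ) = 2 ∧ (y.2:ℕ) = 1)) ∧
      c2B n a b s(x,y) = 1 ∧ c1B n a b s(x,y) = a x.1) ∨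
    ((((x.2:ℕ) = 2 ∧ (y.2:ℕ) = 0 ∧ (y.1:ℕ) = (x.1:ℕ) + 1) ∨
      ((x.2:ℕ) = 0 ∧ (y.2:ℕ) = 2 ∧ (x.1:ℕ) = (y.1:ℕ) + 1)) ∧
      c2B n a b s(x,y) = 1 ∧ c1B n a b s(x,y) = 0) ∨
    (x.1 ≠ y.1 ∧
      (((x.2:ℕ) = 0 ∧ (y.2:ℕ) = 2 ∧ (x.1:ℕ) = 0 ∧ (y.1:ℕ) = n - 1) ∨
       ((x.2:ℕ) = 2 ∧ (y.2:ℕ) = 0 ∧ (y.1:ℕ) = 0 ∧ (x.1:ℕ) = n - 1)) ∧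
      c2B n a b s(x,y) = 1 ∧ c1B n a b s(x,y) = (∑ i, (a i : ℤ)) + 1) := by
  obtain ⟨j, k⟩ := x
  obtain ⟨j', k'⟩ := y
  rw [c2B_mk] at h ⊢
  rw [c1B_mk]
  fin_cases k <;> fin_cases k' <;>
    simp [wtB] at h ⊢ <;>
    split_ifs at h ⊢ <;>
    simp_all <;>
    omega
end Inventory

section Potentials
variable {n : ℕ} (a b : Fin n → ℕ)

/-- potential for the case `l < i` -/
def potA (l i B : ℕ) (z : Vtx n) : ℕ :=
  if (z.1:ℕ) < l then 1
  else if (z.1:ℕ) = l then (if (z.2:ℕ) = 2 then B else if (z.2:ℕ) = 1 then 0 else 1)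
  else if (z.1:ℕ) < i then B
  else if (z.1:ℕ) = i then (if (z.2:ℕ) = 2 then 2 else B)
  else 2

/-- potential for the case `i < l` -/
def potB (l i B C : ℕ) (z : Vtx n) : ℕ :=
  if (z.1:ℕ) < i then C
  else if (z.1:ℕ) = i then (if (z.2:ℕ) = 2 then 1 else C)
  else if (z.1:ℕ) < l then 1
  else if (z.1:ℕ) = l then (if (z.2:ℕ) = 2 then B else if (z.2:ℕ) = 1 then 0 else 1)
  else B

lemma lipschitzA (T : Finset (Sym2 (Vtx n))) (hTE : ∀ e ∈ T, c2B n a b e ≠ 0)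
    (l i : Fin n) (hli : (l:ℕ) < (i:ℕ)) (hbil : b i ≤ b l)
    (hpl : s(pB n l, wB n l) ∉ T) (hpi : s(pB n i, wB n i) ∉ T)
    (x y : Vtx n) (hadj : (fromEdgeSet (↑T : Set (Sym2 (Vtx n)))).Adj x y) :
    potA (l:ℕ) (i:ℕ) (b i + 3) y ≤ potA (l:ℕ) (i:ℕ) (b i + 3) x + c2B n a b s(x,y) := by
  rw [fromEdgeSet_adj] at hadj
  obtain ⟨hmemT, hne⟩ := hadj
  rw [Finset.mem_coe] at hmemT
  have hc2 : c2B n a b s(x,y) ≠ 0 := hTE _ hmemT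
  have hl' : (l:ℕ) < n := l.isLt
  have hi' : (i:ℕ) < n := i.isLt
  obtain ⟨x1, x2⟩ := x
  obtain ⟨y1, y2⟩ := y
  rcases edge_inv a b hc2 with ⟨h1, h2, hc2v, -⟩ | ⟨h1, h2, hc2v, -⟩ | ⟨h1, h2, hc2v, hc1v⟩ |
    ⟨h2, hc2v, -⟩ | ⟨hne1, h2, hc2v, -⟩
  · -- v-w edge within gadget x1
    simp only at h1 h2; subst h1
    rw [hc2v]
    by_cases hxi : x1 = i
    · subst hxi; simp only [potA]; split_ifs <;> omega
    by_cases hxl : x1 = l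
    · subst hxl; simp only [potA]; split_ifs <;> omega
    · have hxi' : (x1:ℕ) ≠ (i:ℕ) := fun h => hxi (Fin.ext h)
      have hxl' : (x1:ℕ) ≠ (l:ℕ) := fun h => hxl (Fin.ext h)
      simp only [potA]; split_ifs <;> omega
  · -- v-p edge
    simp only at h1 h2; subst h1
    rw [hc2v]
    simp only [potA]; split_ifs <;> omega
  · -- p-w edge: x1 ∉ {i, l}
    simp only at h1 h2; subst h1
    have hpw : s((x1,x2), (x1,y2)) = s(pB n x1, wB n x1) ∨
        s((x1,x2), (x1,y2)) = s(wB n x1, pB n x1) := by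
      rcases h2 with ⟨ha2, hb2⟩ | ⟨ha2, hb2⟩
      · left
        have : x2 = (1 : Fin 3) := Fin.ext (by simpa using ha2)
        have h2' : y2 = (2 : Fin 3) := Fin.ext (by simpa using hb2)
        rw [this, h2']; rfl
      · right
        have : x2 = (2 : Fin 3) := Fin.ext (by simpa using ha2)
        have h2' : y2 = (1 : Fin 3) := Fin.ext (by simpa using hb2)
        rw [this, h2']; rfl
    have hmem' : s(pB n x1, wB n x1) ∈ T := by
      rcases hpw with h | h
      · rwa [h] at hmemT
      · rw [h] at hmemT; rwa [Sym2.eq_swap] at hmemT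
    have hxi : x1 ≠ i := fun h => hpi (h ▸ hmem')
    have hxl : x1 ≠ l := fun h => hpl (h ▸ hmem')
    have hxi' : (x1:ℕ) ≠ (i:ℕ) := fun h => hxi (Fin.ext h)
    have hxl' : (x1:ℕ) ≠ (l:ℕ) := fun h => hxl (Fin.ext h)
    rw [hc2v]
    simp only [potA]; split_ifs <;> omega
  · -- connector edge
    rw [hc2v]
    simp only [potA]
    rcases h2 with ⟨ha2, hb2, hj⟩ | ⟨ha2, hb2, hj⟩ <;> simp only at ha2 hb2 hj <;>
      split_ifs <;> omega
  · -- s-t edge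
    rw [hc2v]
    simp only [potA]
    rcases h2 with ⟨ha2, hb2, hj0, hj1⟩ | ⟨ha2, hb2, hj0, hj1⟩ <;>
      simp only at ha2 hb2 hj0 hj1 <;> split_ifs <;> omega
lemma lipschitzB (T : Finset (Sym2 (Vtx n))) (hTE : ∀ e ∈ T, c2B n a b e ≠ 0)
    (l i : Fin n) (hli : (i:ℕ) < (l:ℕ)) (hbil : b i ≤ b l)
    (hpl : s(pB n l, wB n l) ∉ T) (hpi : s(pB n i, wB n i) ∉ T)
    (x y : Vtx n) (hadj : (fromEdgeSet (↑T : Set (Sym2 (Vtx n)))).Adj x y) :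
    potB (l:ℕ) (i:ℕ) (b i + 3) (b i + 2) y ≤ potB (l:ℕ) (i:ℕ) (b i + 3) (b i + 2) x + c2B n a b s(x,y) := by
  rw [fromEdgeSet_adj] at hadj
  obtain ⟨hmemT, hne⟩ := hadj
  rw [Finset.mem_coe] at hmemT
  have hc2 : c2B n a b s(x,y) ≠ 0 := hTE _ hmemT
  have hl' : (l:ℕ) < n := l.isLt
  have hi' : (i:ℕ) < n := i.isLt
  obtain ⟨x1, x2⟩ := x
  obtain ⟨y1, y2⟩ := y
  rcases edge_inv a b hc2 with ⟨h1, h2, hc2v, -⟩ | ⟨h1, h2, hc2v, -⟩ | ⟨h1, h2, hc2v, hc1v⟩ |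
    ⟨h2, hc2v, -⟩ | ⟨hne1, h2, hc2v, -⟩
  · -- v-w edge within gadget x1
    simp only at h1 h2; subst h1
    rw [hc2v]
    by_cases hxi : x1 = i
    · subst hxi; simp only [potB]; split_ifs <;> omega
    by_cases hxl : x1 = l
    · subst hxl; simp only [potB]; split_ifs <;> omega
    · have hxi' : (x1:ℕ) ≠ (i:ℕ) := fun h => hxi (Fin.ext h)
      have hxl' : (x1:ℕ) ≠ (l:ℕ) := fun h => hxl (Fin.ext h)
      simp only [potB]; split_ifs <;> omega
  · -- v-p edge
    simp only at h1 h2; subst h1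
    rw [hc2v]
    simp only [potB]; split_ifs <;> omega
  · -- p-w edge: x1 ∉ {i, l}
    simp only at h1 h2; subst h1
    have hpw : s((x1,x2), (x1,y2)) = s(pB n x1, wB n x1) ∨
        s((x1,x2), (x1,y2)) = s(wB n x1, pB n x1) := by
      rcases h2 with ⟨ha2, hb2⟩ | ⟨ha2, hb2⟩
      · left
        have : x2 = (1 : Fin 3) := Fin.ext (by simpa using ha2)
        have h2' : y2 = (2 : Fin 3) := Fin.ext (by simpa using hb2)
        rw [this, h2']; rfl
      · right
        have : x2 = (2 : Fin 3) := Fin.ext (by simpa using ha2)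
        have h2' : y2 = (1 : Fin 3) := Fin.ext (by simpa using hb2)
        rw [this, h2']; rfl
    have hmem' : s(pB n x1, wB n x1) ∈ T := by
      rcases hpw with h | h
      · rwa [h] at hmemT
      · rw [h] at hmemT; rwa [Sym2.eq_swap] at hmemT
    have hxi : x1 ≠ i := fun h => hpi (h ▸ hmem')
    have hxl : x1 ≠ l := fun h => hpl (h ▸ hmem')
    have hxi' : (x1:ℕ) ≠ (i:ℕ) := fun h => hxi (Fin.ext h)
    have hxl' : (x1:ℕ) ≠ (l:ℕ) := fun h => hxl (Fin.ext h)
    rw [hc2v]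
    simp only [potB]; split_ifs <;> omega
  · -- connector edge
    rw [hc2v]
    simp only [potB]
    rcases h2 with ⟨ha2, hb2, hj⟩ | ⟨ha2, hb2, hj⟩ <;> simp only at ha2 hb2 hj <;>
      split_ifs <;> omega
  · -- s-t edge
    rw [hc2v]
    simp only [potB]
    rcases h2 with ⟨ha2, hb2, hj0, hj1⟩ | ⟨ha2, hb2, hj0, hj1⟩ <;>
      simp only at ha2 hb2 hj0 hj1 <;> split_ifs <;> omega
end Potentials

section MoreWdist
variable {V : Type*} {F : Set (Sym2 V)} {c2 : Sym2 V → ℕ} {u v : V}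

lemma wdist_symm : wdist F c2 u v = wdist F c2 v u := by
  unfold wdist
  congr 1
  ext k
  constructor <;> rintro ⟨p, rfl⟩ <;>
    exact ⟨p.reverse, by simp [SimpleGraph.Walk.edges_reverse, List.sum_reverse]⟩

lemma wdist_congr {F' : Set (Sym2 V)} (h : fromEdgeSet F = fromEdgeSet F') :
    wdist F c2 u v = wdist F' c2 u v := by
  unfold wdist; rw [h]

end MoreWdist

section EdgeComp
variable {n : ℕ} (a b : Fin n → ℕ)

lemma c2pw (i : Fin n) : c2B n a b s(pB n i, wB n i) = 1 := by
  rw [c2B_mk]; simp [wtB, pB, wB]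

lemma c1pw (i : Fin n) : c1B n a b s(pB n i, wB n i) = (a i : ℤ) := by
  rw [c1B_mk]; simp [wtB, pB, wB]

lemma c2vp (i : Fin n) : c2B n a b s(vB n i, pB n i) = 1 := by
  rw [c2B_mk]; simp [wtB, pB, vB]

lemma c1vp (i : Fin n) : c1B n a b s(vB n i, pB n i) = 0 := by
  rw [c1B_mk]; simp [wtB, pB, vB]

lemma c2vw (i : Fin n) : c2B n a b s(vB n i, wB n i) = b i + 2 := by
  rw [c2B_mk]; simp [wtB, vB, wB]

lemma c1vw (i : Fin n) : c1B n a b s(vB n i, wB n i) = 0 := by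
  rw [c1B_mk]; simp [wtB, vB, wB]

lemma potA_p (i' B : ℕ) (lf : Fin n) : potA (lf:ℕ) i' B (pB n lf) = 0 := by
  simp [potA, pB]

lemma potA_w (i' B : ℕ) (lf : Fin n) (h : (lf:ℕ) < i') : potA (lf:ℕ) i' B (wB n lf) = B := by
  simp [potA, wB]

lemma potB_w (i' B C : ℕ) (lf : Fin n) (h : i' < (lf:ℕ)) :
    potB (lf:ℕ) i' B C (wB n lf) = B := by
  simp only [potB, wB]; norm_num; split_ifs <;> omega

lemma potB_p (i' B C : ℕ) (lf : Fin n) (h : i' < (lf:ℕ)) :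
    potB (lf:ℕ) i' B C (pB n lf) = 0 := by
  simp only [potB, pB]; norm_num; split_ifs <;> omega

end EdgeComp

/-- Let `S` be a Pareto-optimal spanner of `H` containing the edge
`{s, t}`, missing at least one edge `{v_i', w_i}`, and let `l` be an index with
`{v_l', w_l} ∉ S` of greatest weight `c²_l` among all such indices.  Then
`f2(S) = d^S(v_l', w_l)/d^E(v_l', w_l) = d^S(v_l', w_l)`. -/
theorem stretch_attained_at_vl_wl (n : ℕ) (hn : 0 < n) (a b : Fin n → ℕ)
    (ha : ∀ i, 0 < a i) (hb : ∀ i, 0 < b i)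
    (S : Finset (Sym2 (Vtx n))) (hspan : IsSpanner (HB n a b) (↑S))
    (hpareto : ¬ ∃ S' : Finset (Sym2 (Vtx n)), IsSpanner (HB n a b) (↑S') ∧
      Dominates (valueVec (HB n a b) (c1B n a b) (c2B n a b) S')
        (valueVec (HB n a b) (c1B n a b) (c2B n a b) S))
    (hst : s(sB n hn, tB n hn) ∈ S)
    (l : Fin n) (hl : s(pB n l, wB n l) ∉ S)
    (hmax : ∀ i : Fin n, s(pB n i, wB n i) ∉ S → b i ≤ b l) :
    f2 (HB n a b).edgeSet (↑S) (c2B n a b) =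
        (wdist (↑S) (c2B n a b) (pB n l) (wB n l) : ℚ) /
          (wdist (HB n a b).edgeSet (c2B n a b) (pB n l) (wB n l) : ℚ) ∧
      f2 (HB n a b).edgeSet (↑S) (c2B n a b) =
        (wdist (↑S) (c2B n a b) (pB n l) (wB n l) : ℚ) := by
  classical
  set c2 := c2B n a b with hc2def
  -- the zero-cost edges and the enlarged spanner T
  set Z : Finset (Sym2 (Vtx n)) :=
    Finset.univ.filter (fun e => e ∈ (HB n a b).edgeSet ∧ c1B n a b e = 0) with hZdef
  set T : Finset (Sym2 (Vtx n)) := S ∪ Z with hTdef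
  have hmemZ : ∀ e : Sym2 (Vtx n), e ∈ Z ↔ e ∈ (HB n a b).edgeSet ∧ c1B n a b e = 0 := by
    intro e; simp [hZdef]
  have hHedge : (HB n a b).edgeSet = EB n a b \ {e | e.IsDiag} :=
    edgeSet_fromEdgeSet _
  have hSE : (↑S : Set (Sym2 (Vtx n))) ⊆ EB n a b := by
    intro e he
    have := hspan.1 he
    rw [hHedge] at this
    exact this.1
  have hST : S ⊆ T := Finset.subset_union_left
  have hSTset : (↑S : Set (Sym2 (Vtx n))) ⊆ ↑T := Finset.coe_subset.2 hST
  have hTH : (↑T : Set (Sym2 (Vtx n))) ⊆ (HB n a b).edgeSet := by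
    intro e he
    rcases Finset.mem_union.1 (Finset.mem_coe.1 he) with h | h
    · exact hspan.1 (Finset.mem_coe.2 h)
    · exact ((hmemZ e).1 h).1
  have hTE : (↑T : Set (Sym2 (Vtx n))) ⊆ EB n a b := by
    intro e he
    have := hTH he
    rw [hHedge] at this
    exact this.1
  have hTEfin : ∀ e ∈ T, c2B n a b e ≠ 0 := fun e he => hTE (Finset.mem_coe.2 he)
  have hconnS : (fromEdgeSet (↑S : Set (Sym2 (Vtx n)))).Connected := hspan.2
  have hconnT : (fromEdgeSet (↑T : Set (Sym2 (Vtx n)))).Connected :=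
    hconnS.mono (fromEdgeSet_mono hSTset)
  have wkS : ∀ u v : Vtx n, Nonempty ((fromEdgeSet (↑S : Set (Sym2 (Vtx n)))).Walk u v) :=
    fun u v => hconnS u v
  have wkT : ∀ u v : Vtx n, Nonempty ((fromEdgeSet (↑T : Set (Sym2 (Vtx n)))).Walk u v) :=
    fun u v => hconnT u v
  have wkE : ∀ u v : Vtx n, Nonempty ((fromEdgeSet (EB n a b)).Walk u v) := by
    intro u v
    refine (wkS u v).map (fun p => p.transfer _ (fun e he => ?_))
    have h1 := p.edges_subset_edgeSet he
    rw [edgeSet_fromEdgeSet] at h1 ⊢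
    exact ⟨hSE h1.1, h1.2⟩
  have hposE : ∀ e ∈ EB n a b, c2B n a b e ≠ 0 := fun e he => he
  have hposT : ∀ e ∈ (↑T : Set (Sym2 (Vtx n))), c2B n a b e ≠ 0 := fun e he => hTE he
  have hposS : ∀ e ∈ (↑S : Set (Sym2 (Vtx n))), c2B n a b e ≠ 0 := fun e he => hSE he
  have hplwl : pB n l ≠ wB n l := by simp [pB, wB]
  -- p-w edges missing from S are missing from T
  have pw_not_T : ∀ i : Fin n, s(pB n i, wB n i) ∉ S → s(pB n i, wB n i) ∉ T := by
    intro i hiS hiT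
    rcases Finset.mem_union.1 hiT with h | h
    · exact hiS h
    · have h2 := ((hmemZ _).1 h).2
      rw [c1pw] at h2
      exact absurd h2 (by exact_mod_cast (ha i).ne')
  have hlT : s(pB n l, wB n l) ∉ T := pw_not_T l hl
  -- the key lower bound
  have Dge : ∀ i : Fin n, s(pB n i, wB n i) ∉ S → i ≠ l →
      b i + 3 ≤ wdist (↑T) c2 (pB n l) (wB n l) := by
    intro i hiS hil
    have hne' : (i : ℕ) ≠ (l : ℕ) := fun h => hil (Fin.ext h)
    have hbil : b i ≤ b l := hmax i hiS
    have hiT := pw_not_T i hiS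
    rcases lt_or_gt_of_ne hne' with hlt | hlt
    · -- i < l : use potB
      have hlip := lipschitzB a b T hTEfin l i hlt hbil hlT hiT
      have hpot := wdist_ge_potential (F := (↑T : Set (Sym2 (Vtx n)))) (c2 := c2)
        (u := pB n l) (v := wB n l) (potB (l:ℕ) (i:ℕ) (b i + 3) (b i + 2)) (fun x y h => hlip x y h) (wkT _ _)
      rw [potB_p _ _ _ _ hlt, potB_w _ _ _ _ hlt] at hpot
      simpa using hpot
    · -- l < i : use potA
      have hlip := lipschitzA a b T hTEfin l i hlt hbil hlT hiT
      have hpot := wdist_ge_potential (F := (↑T : Set (Sym2 (Vtx n)))) (c2 := c2)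
        (u := pB n l) (v := wB n l) (potA (l:ℕ) (i:ℕ) (b i + 3)) (fun x y h => hlip x y h) (wkT _ _)
      rw [potA_p, potA_w _ _ _ hlt] at hpot
      simpa using hpot
  -- the upper bound via the two-edge walk p_i - v_i - w_i
  have Dle : ∀ i : Fin n, wdist (↑T) c2 (pB n i) (wB n i) ≤ b i + 3 := by
    intro i
    have hz1 : s(vB n i, pB n i) ∈ T := by
      apply Finset.mem_union_right
      refine (hmemZ _).2 ⟨?_, c1vp a b i⟩
      rw [hHedge]
      refine ⟨?_, ?_⟩
      · show c2B n a b _ ≠ 0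
        rw [c2vp]; exact one_ne_zero
      · simp [vB, pB, Sym2.mk_isDiag_iff]
    have hz2 : s(vB n i, wB n i) ∈ T := by
      apply Finset.mem_union_right
      refine (hmemZ _).2 ⟨?_, c1vw a b i⟩
      rw [hHedge]
      refine ⟨?_, ?_⟩
      · show c2B n a b _ ≠ 0
        rw [c2vw]; exact (Nat.succ_ne_zero _)
      · simp [vB, wB, Sym2.mk_isDiag_iff]
    have adj1 : (fromEdgeSet (↑T : Set (Sym2 (Vtx n)))).Adj (pB n i) (vB n i) := by
      rw [fromEdgeSet_adj]
      refine ⟨?_, by simp [pB, vB]⟩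
      rw [Finset.mem_coe, Sym2.eq_swap]
      exact hz1
    have adj2 : (fromEdgeSet (↑T : Set (Sym2 (Vtx n)))).Adj (vB n i) (wB n i) := by
      rw [fromEdgeSet_adj]
      exact ⟨Finset.mem_coe.2 hz2, by simp [vB, wB]⟩
    have hwalk := wdist_le_walk (c2 := c2)
      (SimpleGraph.Walk.cons adj1 (SimpleGraph.Walk.cons adj2 SimpleGraph.Walk.nil))
    refine le_trans hwalk ?_
    have e1 : c2 s(pB n i, vB n i) = 1 := by rw [hc2def, Sym2.eq_swap]; exact c2vp a b i
    have e2 : c2 s(vB n i, wB n i) = b i + 2 := c2vw a b i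
    simp only [SimpleGraph.Walk.edges_cons, SimpleGraph.Walk.edges_nil, List.map_cons,
      List.map_nil, List.sum_cons, List.sum_nil, e1, e2]
    omega
  -- notation for the two distances
  have hD1 : 1 ≤ wdist (↑T) c2 (pB n l) (wB n l) := wdist_pos hposT hplwl (wkT _ _)
  -- per-edge stretch bound
  have claimE : ∀ x y : Vtx n, (fromEdgeSet (EB n a b)).Adj x y →
      wdist (↑T) c2 x y ≤ c2B n a b s(x,y) * wdist (↑T) c2 (pB n l) (wB n l) := by
    intro x y hadj
    rw [fromEdgeSet_adj] at hadj
    obtain ⟨hxyE, hne⟩ := hadj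
    by_cases hmem : s(x,y) ∈ T
    · have adj : (fromEdgeSet (↑T : Set (Sym2 (Vtx n)))).Adj x y := by
        rw [fromEdgeSet_adj]; exact ⟨Finset.mem_coe.2 hmem, hne⟩
      have h1 := wdist_le_walk (c2 := c2) (SimpleGraph.Walk.cons adj SimpleGraph.Walk.nil)
      simp only [SimpleGraph.Walk.edges_cons, SimpleGraph.Walk.edges_nil, List.map_cons,
        List.map_nil, List.sum_cons, List.sum_nil, add_zero] at h1
      refine le_trans h1 ?_
      exact Nat.le_mul_of_pos_right _ hD1
    · obtain ⟨x1, x2⟩ := x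
      obtain ⟨y1, y2⟩ := y
      have hc2ne : c2B n a b s((x1,x2),(y1,y2)) ≠ 0 := hxyE
      have notZ : s((x1,x2),(y1,y2)) ∉ Z := fun h => hmem (Finset.mem_union_right _ h)
      have hc1ne : c1B n a b s((x1,x2),(y1,y2)) ≠ 0 := by
        intro h0
        exact notZ ((hmemZ _).2 ⟨by
          rw [hHedge]
          exact ⟨hxyE, by simpa [Sym2.mk_isDiag_iff] using hne⟩, h0⟩)
      rcases edge_inv a b hc2ne with ⟨h1, h2, hc2v, hc1v⟩ | ⟨h1, h2, hc2v, hc1v⟩ |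
        ⟨h1, h2, hc2v, hc1v⟩ | ⟨h2, hc2v, hc1v⟩ | ⟨hne1, h2, hc2v, hc1v⟩
      · exact absurd hc1v hc1ne
      · exact absurd hc1v hc1ne
      · -- p-w edge
        simp only at h1; subst h1
        rw [hc2v, one_mul]
        have key : ∀ j : Fin n, s(pB n j, wB n j) ∉ T →
            wdist (↑T) c2 (pB n j) (wB n j) ≤ wdist (↑T) c2 (pB n l) (wB n l) := by
          intro j hjT
          by_cases hjl : j = l
          · subst hjl; exact le_refl _
          · have hjS : s(pB n j, wB n j) ∉ S := fun h => hjT (hST h)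
            exact le_trans (Dle j) (Dge j hjS hjl)
        rcases h2 with ⟨ha2, hb2⟩ | ⟨ha2, hb2⟩
        · have hx : (x1, x2) = pB n x1 := by
            simp only at ha2
            exact Prod.ext rfl (Fin.ext (by simpa [pB] using ha2))
          have hy : (x1, y2) = wB n x1 := by
            simp only at hb2
            exact Prod.ext rfl (Fin.ext (by simpa [wB] using hb2))
          rw [hx, hy]
          rw [hx, hy] at hmem
          exact key x1 hmem
        · have hx : (x1, x2) = wB n x1 := by
            simp only at ha2
            exact Prod.ext rfl (Fin.ext (by simpa [wB] using ha2))
          have hy : (x1, y2) = pB n x1 := by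
            simp only at hb2
            exact Prod.ext rfl (Fin.ext (by simpa [pB] using hb2))
          rw [hx, hy, wdist_symm]
          rw [hx, hy, Sym2.eq_swap] at hmem
          exact key x1 hmem
      · exact absurd hc1v hc1ne
      · -- s-t edge : in S, contradiction with hmem
        exfalso
        simp only at h2
        rcases h2 with ⟨ha2, hb2, hj0, hj1⟩ | ⟨ha2, hb2, hj0, hj1⟩
        · have hx : (x1, x2) = sB n hn := by
            refine Prod.ext (Fin.ext ?_) (Fin.ext ?_) <;> simp [sB, hj0, ha2]
          have hy : (y1, y2) = tB n hn := by
            refine Prod.ext (Fin.ext ?_) (Fin.ext ?_) <;> simp [tB, hj1, hb2]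
          rw [hx, hy] at hmem
          exact hmem (hST hst)
        · have hx : (x1, x2) = tB n hn := by
            refine Prod.ext (Fin.ext ?_) (Fin.ext ?_) <;> simp [tB, hj1, ha2]
          have hy : (y1, y2) = sB n hn := by
            refine Prod.ext (Fin.ext ?_) (Fin.ext ?_) <;> simp [sB, hj0, hb2]
          rw [hx, hy, Sym2.eq_swap] at hmem
          exact hmem (hST hst)
  -- lift the per-edge bound along walks
  have claimW : ∀ (u v : Vtx n) (p : (fromEdgeSet (EB n a b)).Walk u v),
      wdist (↑T) c2 u v ≤ (p.edges.map c2).sum * wdist (↑T) c2 (pB n l) (wB n l) := by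
    intro u v p
    induction p with
    | nil =>
      refine le_trans (wdist_le_walk (c2 := c2) (SimpleGraph.Walk.nil' _)) ?_
      simp
    | @cons x' y' z' h q ih =>
      have tri := wdist_triangle (c2 := c2) (wkT x' y') (wkT y' z')
      have he := claimE x' y' h
      rw [← hc2def] at he
      simp only [SimpleGraph.Walk.edges_cons, List.map_cons, List.sum_cons, add_mul]
      omega
  have pairBound : ∀ u v : Vtx n,
      wdist (↑T) c2 u v ≤ wdist (EB n a b) c2 u v * wdist (↑T) c2 (pB n l) (wB n l) := by
    intro u v
    obtain ⟨p, hp⟩ := wdist_exists (c2 := c2) (wkE u v)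
    rw [← hp]
    exact claimW u v p
  have hE1pos : ∀ u v : Vtx n, u ≠ v → 1 ≤ wdist (EB n a b) c2 u v :=
    fun u v h => wdist_pos hposE h (wkE u v)
  -- conversion between the two descriptions of the edge set
  have hconvE : ∀ u v : Vtx n,
      wdist ((HB n a b).edgeSet) c2 u v = wdist (EB n a b) c2 u v := by
    intro u v
    refine wdist_congr ?_
    rw [fromEdgeSet_edgeSet]
    rfl
  -- d^E(p_l, w_l) = 1
  have hE1val : wdist (EB n a b) c2 (pB n l) (wB n l) = 1 := by
    refine le_antisymm ?_ (hE1pos _ _ hplwl)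
    have adj : (fromEdgeSet (EB n a b)).Adj (pB n l) (wB n l) := by
      rw [fromEdgeSet_adj]
      refine ⟨?_, hplwl⟩
      show c2B n a b _ ≠ 0
      rw [c2pw]; exact one_ne_zero
    have h1 := wdist_le_walk (c2 := c2) (SimpleGraph.Walk.cons adj SimpleGraph.Walk.nil)
    simpa [hc2def, c2pw] using h1
  -- f2 of S is at least the ratio at the pair (p_l, w_l)
  have hf2S_ge : (wdist (↑S) c2 (pB n l) (wB n l) : ℚ) ≤ f2 (HB n a b).edgeSet (↑S) c2 := by
    unfold f2
    split_ifs with hfil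
    swap
    · exact absurd ⟨(pB n l, wB n l), by simpa using hplwl⟩ hfil
    refine le_trans ?_ (Finset.le_sup' (b := ((pB n l, wB n l) : Vtx n × Vtx n)) _
      (by simpa using hplwl))
    simp only
    rw [hconvE, hE1val]
    norm_num
  -- f2 of T is at most d^T(p_l, w_l)
  have hf2T_le : f2 (HB n a b).edgeSet (↑T) c2 ≤ (wdist (↑T) c2 (pB n l) (wB n l) : ℚ) := by
    unfold f2
    split_ifs with hfil
    swap
    · exact absurd ⟨(pB n l, wB n l), by simpa using hplwl⟩ hfil
    refine Finset.sup'_le _ _ ?_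
    rintro ⟨u, v⟩ hm
    have huv : u ≠ v := by
      simp only [Finset.mem_filter] at hm
      exact hm.2
    simp only
    rw [hconvE]
    have h1 : (0:ℚ) < (wdist (EB n a b) c2 u v : ℚ) := by
      exact_mod_cast lt_of_lt_of_le zero_lt_one (by exact_mod_cast hE1pos u v huv)
    rw [div_le_iff₀ h1]
    have h2 := pairBound u v
    calc ((wdist (↑T) c2 u v : ℚ))
        ≤ ((wdist (EB n a b) c2 u v * wdist (↑T) c2 (pB n l) (wB n l) : ℕ) : ℚ) := by
          exact_mod_cast h2
      _ = _ := by push_cast; ring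
  -- monotonicity of f2 under S ⊆ T
  have hf2mono : f2 (HB n a b).edgeSet (↑T) c2 ≤ f2 (HB n a b).edgeSet (↑S) c2 := by
    unfold f2
    split_ifs with hfil
    swap
    · exact le_refl _
    apply Finset.sup'_mono_fun
    rintro ⟨u, v⟩ hm
    have huv : u ≠ v := by
      simp only [Finset.mem_filter] at hm
      exact hm.2
    simp only
    have hd : (0:ℚ) < (wdist ((HB n a b).edgeSet) c2 u v : ℚ) := by
      rw [hconvE]
      exact_mod_cast lt_of_lt_of_le zero_lt_one (by exact_mod_cast hE1pos u v huv)
    exact (div_le_div_iff_of_pos_right hd).2 (by exact_mod_cast wdist_anti hSTset (wkS u v))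
  -- equal first objective
  have hf1 : f1 (c1B n a b) T = f1 (c1B n a b) S := by
    unfold f1
    refine (Finset.sum_subset hST ?_).symm
    intro e heT heS
    rcases Finset.mem_union.1 heT with h | h
    · exact absurd h heS
    · exact ((hmemZ e).1 h).2
  have hspanT : IsSpanner (HB n a b) (↑T) := ⟨hTH, hconnT⟩
  have hvle : valueVec (HB n a b) (c1B n a b) c2 T ≤ valueVec (HB n a b) (c1B n a b) c2 S := by
    rw [valueVec, valueVec, Prod.mk_le_mk]
    exact ⟨by rw [hf1], hf2mono⟩
  have hveq : valueVec (HB n a b) (c1B n a b) c2 T = valueVec (HB n a b) (c1B n a b) c2 S := by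
    by_contra hne2
    exact hpareto ⟨T, hspanT, hvle, hne2⟩
  have hf2eq : f2 (HB n a b).edgeSet (↑T) c2 = f2 (HB n a b).edgeSet (↑S) c2 := by
    have := congrArg Prod.snd hveq
    simpa [valueVec] using this
  have hDTS : wdist (↑T) c2 (pB n l) (wB n l) ≤ wdist (↑S) c2 (pB n l) (wB n l) :=
    wdist_anti hSTset (wkS _ _)
  have hfinal : f2 (HB n a b).edgeSet (↑S) c2 = (wdist (↑S) c2 (pB n l) (wB n l) : ℚ) := by
    refine le_antisymm ?_ hf2S_ge
    rw [← hf2eq]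
    exact le_trans hf2T_le (by exact_mod_cast hDTS)
  refine ⟨?_, hfinal⟩
  rw [hfinal, hconvE, hE1val]
  norm_num

end MSpPaper
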